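/- arXiv:1801.04384 — 6 statements merged into one kernel-verified Lean document; each statement's English description precedes it below -/
import Mathlib

section
/- For fixed n, define d_k = 1/C(n,k+1) − 1/C(n,k) for 0 ≤ k ≤ n−1. Then d_k < d_{k+1} for all 0 ≤ k ≤ n−2; i.e., the function k ↦ 1/C(n,k) is strictly discretely convex on {0,...,n}. -/
/-- For fixed `n`, the forward difference `d_k = 1/C(n,k+1) - 1/C(n,k)` of the reciprocal
binomial function is strictly increasing: `d_k < d_{k+1}` for all `0 ≤ k ≤ n-2`. -/
theorem reciprocal_binomial_strict_convex (n k : ℕ) (hk : k + 2 ≤ n) :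
    (1 / (n.choose (k + 1)) - 1 / (n.choose k) : ℚ) <
      1 / (n.choose (k + 2)) - 1 / (n.choose (k + 1)) := by
  have hk0 : k ≤ n := by omega
  have hk1 : k + 1 ≤ n := by omega
  have ha : (0 : ℚ) < n.choose k := by exact_mod_cast Nat.choose_pos hk0
  have hb : (0 : ℚ) < n.choose (k + 1) := by exact_mod_cast Nat.choose_pos hk1
  have hc : (0 : ℚ) < n.choose (k + 2) := by exact_mod_cast Nat.choose_pos hk
  have h1 : (n.choose (k + 1) : ℚ) * (k + 1) = n.choose k * ((n : ℚ) - k) := by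
    have := Nat.choose_succ_right_eq n k
    have : ((n.choose (k + 1) * (k + 1) : ℕ) : ℚ) = ((n.choose k * (n - k) : ℕ) : ℚ) := by
      exact congrArg (fun m : ℕ => (m : ℚ)) this
    push_cast [Nat.cast_sub hk0] at this
    linarith
  have h2 : (n.choose (k + 2) : ℚ) * (k + 2) = n.choose (k + 1) * ((n : ℚ) - k - 1) := by
    have := Nat.choose_succ_right_eq n (k + 1)
    have : ((n.choose (k + 2) * (k + 2) : ℕ) : ℚ) = ((n.choose (k + 1) * (n - (k + 1)) : ℕ) : ℚ) := by
      exact_mod_cast congrArg (fun m : ℕ => (m : ℚ)) this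
    push_cast [Nat.cast_sub hk1] at this
    linarith
  have hp : (1 : ℚ) ≤ (n : ℚ) - k - 1 := by
    have : (k + 2 : ℚ) ≤ n := by exact_mod_cast hk
    linarith
  have key : ((n : ℚ) - k - 1) * ((n : ℚ) - k) + (k + 1) * (k + 2)
      > 2 * (k + 1) * ((n : ℚ) - k - 1) := by
    nlinarith [sq_nonneg ((n : ℚ) - k - 1 - (k + 1))]
  rw [div_sub_div _ _ hb.ne' ha.ne', div_sub_div _ _ hc.ne' hb.ne',
    div_lt_div_iff₀ (by positivity) (by positivity)]
  have key' : 0 < ((n : ℚ) - k - 1) * ((n : ℚ) - k) + (k + 1) * (k + 2)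
      - 2 * (k + 1) * ((n : ℚ) - k - 1) := by linarith
  set a : ℚ := (n.choose k : ℚ) with ha_def
  set b : ℚ := (n.choose (k + 1) : ℚ) with hb_def
  set c : ℚ := (n.choose (k + 2) : ℚ) with hc_def
  have hQ : (0 : ℚ) < ((n : ℚ) - k) * (k + 2) := by
    have : (1 : ℚ) ≤ (n : ℚ) - k := by linarith
    positivity
  have e1 : a * c * b * (((n : ℚ) - k) * (k + 2)) =
      b * b * b * ((k + 1) * ((n : ℚ) - k - 1)) := by
    linear_combination (-(c * b * ((k : ℚ) + 2))) * h1 + (b * b * ((k : ℚ) + 1)) * h2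
  have e2 : b * c * b * (((n : ℚ) - k) * (k + 2)) =
      b * b * b * (((n : ℚ) - k - 1) * ((n : ℚ) - k)) := by
    linear_combination (b * b * ((n : ℚ) - k)) * h2
  have e3 : b * b * a * (((n : ℚ) - k) * (k + 2)) =
      b * b * b * ((k + 1) * (k + 2)) := by
    linear_combination (-(b * b * ((k : ℚ) + 2))) * h1
  have final : ((1 * b - c * 1) * (b * a) - (1 * a - b * 1) * (c * b)) *
      (((n : ℚ) - k) * (k + 2)) =
      b * b * b * (((n : ℚ) - k - 1) * ((n : ℚ) - k) + (k + 1) * (k + 2)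
        - 2 * (k + 1) * ((n : ℚ) - k - 1)) := by
    linear_combination e3 - 2 * e1 + e2
  nlinarith [final, mul_pos (mul_pos (mul_pos hb hb) hb) key', hQ]
end

section
/- Let f(k) = 1/C(n,k) and for k1 < k2 define the slope m(k1,k2) = (f(k2) − f(k1))/(k2 − k1). Then for any integers 0 ≤ k1 < k2 < k3 ≤ n, m(k1,k2) < m(k2,k3). -/
private def S (n k : ℕ) : ℚ := 1 / (n.choose (k+1)) - 1 / (n.choose k)

private lemma choose_sq_gt (n k : ℕ) (h : k + 2 ≤ n) :
    n.choose k * n.choose (k+2) < n.choose (k+1) * n.choose (k+1) := by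
  obtain ⟨m, rfl⟩ : ∃ m, n = k + 2 + m := ⟨n - (k+2), by omega⟩
  have h1 := Nat.choose_succ_right_eq (k+2+m) k
  have h2 := Nat.choose_succ_right_eq (k+2+m) (k+1)
  have ha : 0 < (k+2+m).choose k := Nat.choose_pos (by omega)
  have hb : 0 < (k+2+m).choose (k+1) := Nat.choose_pos (by omega)
  have e1 : k + 2 + m - k = m + 2 := by omega
  have e2 : k + 2 + m - (k+1) = m + 1 := by omega
  rw [e1] at h1; rw [e2] at h2
  nlinarith [h1, h2, ha, hb]

private lemma adj_lt (n k : ℕ) (h : k + 2 ≤ n) : S n k < S n (k+1) := by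
  have ha : (0:ℚ) < n.choose k := by exact_mod_cast Nat.choose_pos (by omega)
  have hb : (0:ℚ) < n.choose (k+1) := by exact_mod_cast Nat.choose_pos (by omega)
  have hc : (0:ℚ) < n.choose (k+2) := by exact_mod_cast Nat.choose_pos h
  have hsq : (n.choose k : ℚ) * n.choose (k+2) < (n.choose (k+1) : ℚ) * n.choose (k+1) := by
    exact_mod_cast choose_sq_gt n k h
  set a := (n.choose k : ℚ)
  set b := (n.choose (k+1) : ℚ)
  set c := (n.choose (k+2) : ℚ)
  have h4 : (2*a*c)^2 < (b*(a+c))^2 := by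
    nlinarith [mul_pos ha hc, sq_nonneg (a-c), sq_nonneg (a+c)]
  have key : 2*a*c < b*(a+c) := by
    nlinarith [h4, mul_pos hb (add_pos ha hc), mul_pos ha hc]
  unfold S
  rw [div_sub_div _ _ hb.ne' ha.ne', div_sub_div _ _ hc.ne' hb.ne',
    div_lt_div_iff₀ (by positivity) (by positivity)]
  nlinarith [mul_lt_mul_of_pos_left key hb]

private lemma adj_le (n i j : ℕ) (hij : i ≤ j) (h : j + 1 ≤ n) : S n i ≤ S n j := by
  induction j, hij using Nat.le_induction with
  | base => exact le_refl _
  | succ j hj ih =>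
    exact le_trans (ih (by omega)) (le_of_lt (adj_lt n j (by omega)))

private lemma upper (n a b : ℕ) (hab : a < b) (hbn : b ≤ n) :
    (1 / (n.choose b) : ℚ) - 1 / (n.choose a) ≤ ((b:ℚ) - a) * S n (b-1) := by
  induction b, hab using Nat.le_induction with
  | base =>
    rw [show a + 1 - 1 = a from rfl,
      show (((a+1:ℕ)):ℚ) - (a:ℚ) = 1 from by push_cast; ring, one_mul]
    exact le_of_eq rfl
  | succ b hb ih =>
    have ihb := ih (by omega)
    have hle : S n (b-1) ≤ S n b := by
      have := adj_le n (b-1) b (by omega) (by omega)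
      exact this
    have hba : (0:ℚ) ≤ (b:ℚ) - a := by
      have : (a:ℚ) ≤ b := by exact_mod_cast Nat.le_of_lt hb
      linarith
    have step : (1/(n.choose (b+1)):ℚ) - 1/(n.choose a)
        = ((1/(n.choose b):ℚ) - 1/(n.choose a)) + S n b := by unfold S; ring
    rw [show b + 1 - 1 = b from rfl, step]
    push_cast
    nlinarith [mul_le_mul_of_nonneg_left hle hba, ihb]

private lemma lower (n b c : ℕ) (hbc : b < c) (hcn : c ≤ n) :
    ((c:ℚ) - b) * S n b ≤ (1 / (n.choose c) : ℚ) - 1 / (n.choose b) := by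
  induction c, hbc using Nat.le_induction with
  | base =>
    rw [show (((b+1:ℕ)):ℚ) - (b:ℚ) = 1 from by push_cast; ring, one_mul]
    exact le_of_eq rfl
  | succ c hc ih =>
    have ihc := ih (by omega)
    have hle : S n b ≤ S n c := adj_le n b c (Nat.le_of_lt hc) (by omega)
    have step : (1/(n.choose (c+1)):ℚ) - 1/(n.choose b)
        = ((1/(n.choose c):ℚ) - 1/(n.choose b)) + S n c := by unfold S; ring
    rw [step]
    push_cast
    nlinarith [ihc, hle]

/-- Strict convexity of `k ↦ 1/C(n,k)` via slopes: for integers `0 ≤ k₁ < k₂ < k₃ ≤ n`,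
the slope of the secant from `k₁` to `k₂` is strictly less than that from `k₂` to `k₃`. -/
theorem reciprocal_binomial_slope_lt (n k₁ k₂ k₃ : ℕ)
    (h12 : k₁ < k₂) (h23 : k₂ < k₃) (h3n : k₃ ≤ n) :
    ((1 / (n.choose k₂) : ℚ) - 1 / (n.choose k₁)) / ((k₂ : ℚ) - k₁) <
      ((1 / (n.choose k₃) : ℚ) - 1 / (n.choose k₂)) / ((k₃ : ℚ) - k₂) := by
  have hd1 : (0:ℚ) < (k₂ : ℚ) - k₁ := by
    have : (k₁:ℚ) < k₂ := by exact_mod_cast h12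
    linarith
  have hd2 : (0:ℚ) < (k₃ : ℚ) - k₂ := by
    have : (k₂:ℚ) < k₃ := by exact_mod_cast h23
    linarith
  have h1 := upper n k₁ k₂ h12 (by omega)
  have h3 := lower n k₂ k₃ h23 h3n
  have h2 : S n (k₂-1) < S n k₂ := by
    have := adj_lt n (k₂-1) (by omega)
    have e : k₂ - 1 + 1 = k₂ := by omega
    rwa [e] at this
  rw [div_lt_div_iff₀ hd1 hd2]
  calc ((1 / (n.choose k₂) : ℚ) - 1 / (n.choose k₁)) * ((k₃:ℚ) - k₂)
      ≤ (((k₂:ℚ) - k₁) * S n (k₂-1)) * ((k₃:ℚ) - k₂) :=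
        mul_le_mul_of_nonneg_right h1 (le_of_lt hd2)
    _ < (((k₂:ℚ) - k₁) * S n k₂) * ((k₃:ℚ) - k₂) :=
        mul_lt_mul_of_pos_right (mul_lt_mul_of_pos_left h2 hd1) hd2
    _ = (((k₃:ℚ) - k₂) * S n k₂) * ((k₂:ℚ) - k₁) := by ring
    _ ≤ ((1 / (n.choose k₃) : ℚ) - 1 / (n.choose k₂)) * ((k₂:ℚ) - k₁) :=
        mul_le_mul_of_nonneg_right h3 (le_of_lt hd1)
end

section
/- Let n ≥ 2 and let i satisfy 0 < i < i+1 ≤ ⌊n/2⌋, and let m satisfy C(n,i) ≤ m ≤ C(n,i+1). With α_i* and α_{i+1}* as defined by the standard interpolation formulas, set a_i = ⌊α_i*⌋ and a_{i+1} = ⌈α_{i+1}*⌉. Then a_i + a_{i+1} = m and a_i/C(n,i) + a_{i+1}/C(n,i+1) ≤ 1. -/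
/-!
The continuous optimizers `α = (b - m)/(b - a) · a` and `β = (m - a)/(b - a) · b`, where
`a = C(n,i) < b = C(n,i+1)`, satisfy `α + β = m` and `α/a + β/b = 1`. Since `m` is an integer,
`⌈m - α⌉ = m - ⌊α⌋`, so rounding `α` down and `β` up keeps the sum `m`. Moving weight `α - ⌊α⌋`
from the level of size `a` to the level of size `b` changes `x/a + (m - x)/b` by
`(α - ⌊α⌋)(1/b - 1/a) ≤ 0`, which preserves the LYM constraint.
-/

theorem Nat.choose_lt_succ_of_lt_half_left {r n : ℕ} (h : r < n / 2) :
    n.choose r < n.choose (r + 1) := by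
  have hrn : r + 1 < n - r := by omega
  refine Nat.lt_of_mul_lt_mul_right (a := r + 1) ?_
  rw [choose_succ_right_eq]
  exact Nat.mul_lt_mul_of_pos_left hrn (choose_pos (by omega))

theorem Int.ceil_intCast_sub {R : Type*} [Ring R] [LinearOrder R] [IsStrictOrderedRing R]
    [FloorRing R] (z : ℤ) (x : R) : ⌈(z : R) - x⌉ = z - ⌊x⌋ := by
  rw [← neg_sub, ceil_neg, floor_sub_intCast, neg_sub]

section Interpolation

variable {K : Type*} [Field K] {a b m : K}

theorem interpolation_weights_add (hab : a ≠ b) :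
    (b - m) / (b - a) * a + (m - a) / (b - a) * b = m := by
  field_simp [sub_ne_zero.2 hab.symm]
  ring

theorem interpolation_weights_div_add_div (ha : a ≠ 0) (hb : b ≠ 0) (hab : a ≠ b) :
    (b - m) / (b - a) * a / a + (m - a) / (b - a) * b / b = 1 := by
  field_simp [sub_ne_zero.2 hab.symm]
  ring

end Interpolation

theorem div_add_sub_div_le_div_add_sub_div {K : Type*} [Field K] [LinearOrder K]
    [IsStrictOrderedRing K] {a b x y : K} (m : K) (ha : 0 < a) (hab : a ≤ b) (hxy : x ≤ y) :
    x / a + (m - x) / b ≤ y / a + (m - y) / b := by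
  have key : y / a + (m - y) / b - (x / a + (m - x) / b) = (y - x) * (1 / a - 1 / b) := by ring
  have hinv : 1 / b ≤ 1 / a := one_div_le_one_div_of_le ha hab
  nlinarith [mul_nonneg (sub_nonneg.2 hxy) (sub_nonneg.2 hinv)]

theorem rounded_optimizer_properties_general (n i m : ℕ)
    (hi2 : i + 1 ≤ n / 2) :
    let αi : ℝ := ((n.choose (i + 1) : ℝ) - m) / ((n.choose (i + 1) : ℝ) - n.choose i)
      * n.choose i
    let αi1 : ℝ := ((m : ℝ) - n.choose i) / ((n.choose (i + 1) : ℝ) - n.choose i)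
      * n.choose (i + 1)
    (⌊αi⌋ + ⌈αi1⌉ = (m : ℤ)) ∧
      ((⌊αi⌋ : ℝ) / n.choose i + (⌈αi1⌉ : ℝ) / n.choose (i + 1) ≤ 1) := by
  intro αi αi1
  have ha : (0 : ℝ) < n.choose i := mod_cast Nat.choose_pos (by omega)
  have hab : (n.choose i : ℝ) < n.choose (i + 1) := mod_cast Nat.choose_lt_succ_of_lt_half_left hi2
  have hsum : αi1 = ((m : ℤ) : ℝ) - αi := by
    have := interpolation_weights_add (m := (m : ℝ)) hab.ne
    rw [Int.cast_natCast]
    linarith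
  have hceil : ⌈αi1⌉ = m - ⌊αi⌋ := by rw [hsum, Int.ceil_intCast_sub]
  refine ⟨by omega, ?_⟩
  calc (⌊αi⌋ : ℝ) / n.choose i + (⌈αi1⌉ : ℝ) / n.choose (i + 1)
      = (⌊αi⌋ : ℝ) / n.choose i + (m - ⌊αi⌋) / n.choose (i + 1) := by
        rw [hceil]; push_cast; rfl
    _ ≤ αi / n.choose i + (m - αi) / n.choose (i + 1) :=
        div_add_sub_div_le_div_add_sub_div _ ha hab.le (Int.floor_le αi)
    _ = 1 := by
        rw [← Int.cast_natCast m, ← hsum]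
        exact interpolation_weights_div_add_div ha.ne' (ha.trans hab).ne' hab.ne

/-- Rounding the continuous optimizers: with `a_i = ⌊α_i*⌋` and `a_{i+1} = ⌈α_{i+1}*⌉`,
we have `a_i + a_{i+1} = m` and the LYM constraint `a_i/C(n,i) + a_{i+1}/C(n,i+1) ≤ 1`. -/
theorem rounded_optimizer_properties (n i m : ℕ) (hn : 2 ≤ n) (hi : 0 < i)
    (hi2 : i + 1 ≤ n / 2) (hm1 : n.choose i ≤ m) (hm2 : m ≤ n.choose (i + 1)) :
    let αi : ℝ := ((n.choose (i + 1) : ℝ) - m) / ((n.choose (i + 1) : ℝ) - n.choose i)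
      * n.choose i
    let αi1 : ℝ := ((m : ℝ) - n.choose i) / ((n.choose (i + 1) : ℝ) - n.choose i)
      * n.choose (i + 1)
    (⌊αi⌋ + ⌈αi1⌉ = (m : ℤ)) ∧
      ((⌊αi⌋ : ℝ) / n.choose i + (⌈αi1⌉ : ℝ) / n.choose (i + 1) ≤ 1) :=
  rounded_optimizer_properties_general n i m hi2
end

section
/- Suppose real numbers α_k ≥ 0 for k = 1,...,K satisfy Σ_k α_k = m and Σ_k α_k/C(n,k) ≤ 1, where K = ⌊n/2⌋. If three indices k1 < k2 < k3 exist with α_{k1} > 0 and α_{k3} > 0 and k3 > k1 + 1, then the vector (α_k) does not minimize Σ_k k·α_k subject to these constraints; i.e., any minimizer has support consisting of at most two consecutive indices. -/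
/-!
The map `k ↦ 1 / C(n, k)` is strictly convex: after clearing denominators the inequality
`2 / C(n, k+1) < 1 / C(n, k) + 1 / C(n, k+2)` reads `(k - j)² + k + j + 2 > 0` with `n = k + j + 2`.
Hence its decrements `1 / C(n, k) - 1 / C(n, k+1)` strictly decrease, and they are nonnegative up
to `n / 2`. Given mass at `k₁` and at `k₃ > k₁ + 1`, shift `δ` from `k₃` to `k₃ - 1` and `ε` from `k₁`
to `k₁ + 1`, balanced so that `∑ α_k / C(n, k)` is unchanged; `ε < δ` because the decrement at
`k₁` exceeds the one at `k₃ - 1`. The total mass is unchanged too, while `∑ k α_k` drops by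
`δ - ε > 0`.
-/

open Finset

section Transfer

variable {ι : Type*} [DecidableEq ι]

def transfer (α : ι → ℝ) (t : ℝ) (i j : ι) : ι → ℝ :=
  α - Pi.single i t + Pi.single j t

variable {α : ι → ℝ} {t : ℝ} {i j k : ι}

lemma transfer_apply_of_ne (hi : k ≠ i) (hj : k ≠ j) : transfer α t i j k = α k := by
  simp [transfer, hi, hj]

lemma sum_mul_transfer {S : Finset ι} (w : ι → ℝ) (hi : i ∈ S) (hj : j ∈ S) :
    ∑ k ∈ S, w k * transfer α t i j k = ∑ k ∈ S, w k * α k + t * (w j - w i) := by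
  simp [transfer, Pi.single_apply, mul_add, mul_sub, sum_add_distrib, sum_sub_distrib, hi, hj]
  ring

lemma transfer_nonneg {S : Finset ι} (hα : ∀ k ∈ S, 0 ≤ α k) (ht : 0 ≤ t) (hti : t ≤ α i) :
    ∀ k ∈ S, 0 ≤ transfer α t i j k := by
  intro k hk
  have := hα k hk
  simp only [transfer, Pi.add_apply, Pi.sub_apply, Pi.single_apply]
  split_ifs with h₁ h₂ <;> subst_vars <;> linarith

end Transfer

lemma choose_succ_mul_eq_choose_mul (k j : ℕ) :
    ((k + j + 1).choose (k + 1) : ℝ) * (k + 1) = ((k + j + 1).choose k : ℝ) * (j + 1) := by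
  have := Nat.choose_succ_right_eq (k + j + 1) k
  rw [show k + j + 1 - k = j + 1 by omega] at this
  exact_mod_cast this

lemma inv_choose_sub_inv_choose_succ_lt {n k : ℕ} (h : k + 2 ≤ n) :
    (n.choose (k + 1) : ℝ)⁻¹ - (n.choose (k + 2) : ℝ)⁻¹ <
      (n.choose k : ℝ)⁻¹ - (n.choose (k + 1) : ℝ)⁻¹ := by
  obtain ⟨j, rfl⟩ : ∃ j, n = k + j + 2 := ⟨n - k - 2, by omega⟩
  have ha : (0 : ℝ) < (k + j + 2).choose k := by exact_mod_cast Nat.choose_pos (by omega)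
  have hb : (0 : ℝ) < (k + j + 2).choose (k + 1) := by exact_mod_cast Nat.choose_pos (by omega)
  have hc : (0 : ℝ) < (k + j + 2).choose (k + 2) := by exact_mod_cast Nat.choose_pos (by omega)
  have hab := choose_succ_mul_eq_choose_mul k (j + 1)
  have hbc := choose_succ_mul_eq_choose_mul (k + 1) j
  push_cast at hab hbc
  rw [show k + 1 + j + 1 = k + j + 2 by ring, show k + 1 + 1 = k + 2 by ring] at hbc
  rw [show k + (j + 1) + 1 = k + j + 2 by ring] at hab
  set a : ℝ := ((k + j + 2).choose k : ℝ)
  set b : ℝ := ((k + j + 2).choose (k + 1) : ℝ)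
  set c : ℝ := ((k + j + 2).choose (k + 2) : ℝ)
  have ha' : a⁻¹ = (j + 2) / (b * (k + 1)) := by field_simp; linarith
  have hc' : c⁻¹ = (k + 2) / (b * (j + 1)) := by field_simp; linarith
  rw [sub_lt_sub_iff, ha', hc', div_add_div _ _ (by positivity) (by positivity),
    ← two_mul, lt_div_iff₀ (by positivity)]
  field_simp
  nlinarith [sq_nonneg ((k : ℝ) - j)]

lemma strictAntiOn_inv_choose_sub_inv_choose_succ (n : ℕ) :
    StrictAntiOn (fun k ↦ (n.choose k : ℝ)⁻¹ - (n.choose (k + 1) : ℝ)⁻¹) (Set.Iic (n - 1)) :=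
  strictAntiOn_Iic_of_succ_lt fun k hk ↦ by
    simpa only [Order.succ_eq_add_one] using inv_choose_sub_inv_choose_succ_lt (by omega)

lemma inv_choose_succ_le_inv_choose {n k : ℕ} (h : k < n / 2) :
    (n.choose (k + 1) : ℝ)⁻¹ ≤ (n.choose k : ℝ)⁻¹ :=
  inv_anti₀ (by exact_mod_cast Nat.choose_pos (by omega))
    (by exact_mod_cast Nat.choose_le_succ_of_lt_half_left h)

theorem exists_transfer_sum_mul_lt {S : Finset ℕ} {α w : ℕ → ℝ} (hα : ∀ k ∈ S, 0 ≤ α k)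
    {i j : ℕ} (hij : i < j) (hi : i ∈ S) (hi' : i + 1 ∈ S) (hj : j ∈ S) (hj' : j + 1 ∈ S)
    (hαi : 0 < α i) (hαj : 0 < α (j + 1)) (hw : 0 ≤ w j - w (j + 1))
    (hw_lt : w j - w (j + 1) < w i - w (i + 1)) :
    ∃ β : ℕ → ℝ, (∀ k ∈ S, 0 ≤ β k) ∧ ∑ k ∈ S, β k = ∑ k ∈ S, α k ∧
      ∑ k ∈ S, w k * β k = ∑ k ∈ S, w k * α k ∧
      ∑ k ∈ S, (k : ℝ) * β k < ∑ k ∈ S, (k : ℝ) * α k := by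
  set δ := min (α i) (α (j + 1))
  set ε := δ * (w j - w (j + 1)) / (w i - w (i + 1))
  have hD : 0 < w i - w (i + 1) := hw.trans_lt hw_lt
  have hδ : 0 < δ := lt_min hαi hαj
  have hε : 0 ≤ ε := by positivity
  have hεδ : ε < δ := by rw [div_lt_iff₀ hD]; nlinarith
  have hεD : ε * (w i - w (i + 1)) = δ * (w j - w (j + 1)) := div_mul_cancel₀ _ hD.ne'
  set γ := transfer α ε i (i + 1)
  have hγ : γ (j + 1) = α (j + 1) := transfer_apply_of_ne (by omega) (by omega)
  have sum_mul (v : ℕ → ℝ) : ∑ k ∈ S, v k * transfer γ δ (j + 1) j k =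
      ∑ k ∈ S, v k * α k + ε * (v (i + 1) - v i) + δ * (v j - v (j + 1)) := by
    rw [sum_mul_transfer v hj' hj, sum_mul_transfer v hi hi']
  refine ⟨transfer γ δ (j + 1) j, ?_, ?_, ?_, ?_⟩
  · exact transfer_nonneg (transfer_nonneg hα hε (hεδ.le.trans (min_le_left _ _))) hδ.le
      (hγ ▸ min_le_right _ _)
  · simpa using sum_mul 1
  · rw [sum_mul]; linarith
  · rw [sum_mul]; push_cast; linarith

theorem lp_minimizer_support_consecutive_general (n : ℕ) (m : ℝ)
    (α : ℕ → ℝ) (hα0 : ∀ k ∈ Finset.Icc 1 (n / 2), 0 ≤ α k)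
    (hsum : ∑ k ∈ Finset.Icc 1 (n / 2), α k = m)
    (hlym : ∑ k ∈ Finset.Icc 1 (n / 2), α k / (n.choose k : ℝ) ≤ 1)
    (k₁ k₃ : ℕ) (hk₁ : k₁ ∈ Finset.Icc 1 (n / 2)) (hk₃ : k₃ ∈ Finset.Icc 1 (n / 2))
    (hgap : k₁ + 1 < k₃)
    (hpos1 : 0 < α k₁) (hpos3 : 0 < α k₃) :
    ∃ β : ℕ → ℝ, (∀ k ∈ Finset.Icc 1 (n / 2), 0 ≤ β k) ∧
      (∑ k ∈ Finset.Icc 1 (n / 2), β k = m) ∧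
      (∑ k ∈ Finset.Icc 1 (n / 2), β k / (n.choose k : ℝ) ≤ 1) ∧
      (∑ k ∈ Finset.Icc 1 (n / 2), (k : ℝ) * β k) <
        ∑ k ∈ Finset.Icc 1 (n / 2), (k : ℝ) * α k := by
  obtain ⟨j, rfl⟩ : ∃ j, k₃ = j + 1 := ⟨k₃ - 1, by omega⟩
  have ⟨h₁, h₁'⟩ := Finset.mem_Icc.mp hk₁
  have ⟨h₃, h₃'⟩ := Finset.mem_Icc.mp hk₃
  have hgaps := strictAntiOn_inv_choose_sub_inv_choose_succ n
    (Set.mem_Iic.mpr (by omega)) (Set.mem_Iic.mpr (by omega)) (by omega : k₁ < j)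
  obtain ⟨β, hβ0, hβsum, hβlym, hβlt⟩ :=
    exists_transfer_sum_mul_lt (w := fun k ↦ (n.choose k : ℝ)⁻¹) hα0 (by omega) hk₁
      (Finset.mem_Icc.mpr ⟨by omega, by omega⟩) (Finset.mem_Icc.mpr ⟨by omega, by omega⟩) hk₃
      hpos1 hpos3 (sub_nonneg.mpr (inv_choose_succ_le_inv_choose (by omega))) hgaps
  refine ⟨β, hβ0, hβsum.trans hsum, ?_, hβlt⟩
  simp_rw [div_eq_inv_mul] at hlym ⊢
  exact hβlym.trans_le hlym

/-- If a feasible point of the linear program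
`min ∑ k·α_k  s.t.  α_k ≥ 0, ∑ α_k = m, ∑ α_k / C(n,k) ≤ 1` (indices `k ∈ {1,...,⌊n/2⌋}`)
has three indices `k₁ < k₂ < k₃` with `α_{k₁} > 0`, `α_{k₃} > 0` and `k₃ > k₁ + 1`,
then it is not a minimizer: some other feasible point has strictly smaller objective. -/
theorem lp_minimizer_support_consecutive (n : ℕ) (hn : 0 < n) (m : ℝ) (hm : 0 < m)
    (hmle : m ≤ (n.choose (n / 2) : ℝ))
    (α : ℕ → ℝ) (hα0 : ∀ k ∈ Finset.Icc 1 (n / 2), 0 ≤ α k)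
    (hsum : ∑ k ∈ Finset.Icc 1 (n / 2), α k = m)
    (hlym : ∑ k ∈ Finset.Icc 1 (n / 2), α k / (n.choose k : ℝ) ≤ 1)
    (k₁ k₂ k₃ : ℕ) (hk₁ : k₁ ∈ Finset.Icc 1 (n / 2)) (hk₃ : k₃ ∈ Finset.Icc 1 (n / 2))
    (h12 : k₁ < k₂) (h23 : k₂ < k₃) (hgap : k₁ + 1 < k₃)
    (hpos1 : 0 < α k₁) (hpos3 : 0 < α k₃) :
    ∃ β : ℕ → ℝ, (∀ k ∈ Finset.Icc 1 (n / 2), 0 ≤ β k) ∧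
      (∑ k ∈ Finset.Icc 1 (n / 2), β k = m) ∧
      (∑ k ∈ Finset.Icc 1 (n / 2), β k / (n.choose k : ℝ) ≤ 1) ∧
      (∑ k ∈ Finset.Icc 1 (n / 2), (k : ℝ) * β k) <
        ∑ k ∈ Finset.Icc 1 (n / 2), (k : ℝ) * α k :=
  lp_minimizer_support_consecutive_general n m α hα0 hsum hlym k₁ k₃ hk₁ hk₃ hgap hpos1 hpos3
end

section
/- Let F_q be a finite field and let s be a uniformly random element of F_q. Let P(x) = s + Σ_{i=1}^{t−1} p_i x^i where p_1,...,p_{t−1} are i.i.d. uniform on F_q, independent of s. Then for any t−1 distinct nonzero points γ_1,...,γ_{t−1} ∈ F_q, the vector (P(γ_1),...,P(γ_{t−1})) is independent of s; equivalently, the conditional distribution of s given these t−1 evaluations is uniform. -/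
/-!
For a fixed secret `s`, the shares are `s` plus the values at `γ₁, …, γ_{t-1}` of
`p₁ x + ⋯ + p_{t-1} x^{t-1}`; dividing the `j`-th value by `γ_j ≠ 0` leaves an invertible
Vandermonde system, so `p ↦ shares` is a bijection for each `s`. Hence
`(s, p) ↦ (s, shares)` is a bijection of `F × F^{t-1}`; it preserves the uniform measure,
under which the two coordinates are independent.
-/

open Function ProbabilityTheory

theorem injective_sum_mul_pow_succ {R : Type*} [CommRing R] [IsDomain R] {n : ℕ}
    {γ : Fin n → R} (hinj : Injective γ) (hne : ∀ j, γ j ≠ 0) :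
    Injective fun (p : Fin n → R) j => ∑ i : Fin n, p i * γ j ^ ((i : ℕ) + 1) := by
  intro p q hpq
  rw [← sub_eq_zero]
  refine Matrix.eq_zero_of_forall_index_sum_mul_pow_eq_zero hinj fun j => ?_
  have hj : γ j * ∑ i : Fin n, (p - q) i * γ j ^ (i : ℕ) = 0 := by
    rw [Finset.mul_sum, ← sub_eq_zero.mpr (congrFun hpq j), ← Finset.sum_sub_distrib]
    refine Finset.sum_congr rfl fun i _ => ?_
    simp only [Pi.sub_apply]
    ring
  exact (mul_eq_zero.mp hj).resolve_left (hne j)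

namespace PMF

variable {α β : Type*} [Fintype α] [Fintype β] [Nonempty α] [Nonempty β]

theorem toMeasure_uniformOfFintype_preimage_of_bijective [MeasurableSpace α]
    [MeasurableSingletonClass α] [MeasurableSpace β] [MeasurableSingletonClass β] {e : α → β}
    (he : Bijective e) (S : Set β) :
    (uniformOfFintype α).toMeasure (e ⁻¹' S) = (uniformOfFintype β).toMeasure S := by
  classical
  rw [toMeasure_uniformOfFintype_apply _ (Set.toFinite _).measurableSet,
    toMeasure_uniformOfFintype_apply _ (Set.toFinite _).measurableSet,
    Fintype.card_of_bijective he]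
  congr 2
  exact Fintype.card_congr ((Equiv.ofBijective e he).subtypeEquiv fun _ => Iff.rfl)

theorem toMeasure_uniformOfFintype_prod [MeasurableSpace (α × β)]
    [MeasurableSingletonClass (α × β)] (A : Set α) (B : Set β) :
    (uniformOfFintype (α × β)).toMeasure (A ×ˢ B) =
      (uniformOfFintype (α × β)).toMeasure (A ×ˢ Set.univ) *
        (uniformOfFintype (α × β)).toMeasure (Set.univ ×ˢ B) := by
  classical
  simp only [toMeasure_uniformOfFintype_apply _ (Set.toFinite _).measurableSet,
    Fintype.card_congr (Equiv.Set.prod _ _), Fintype.card_prod, Fintype.card_setUniv]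
  push_cast
  have hα : (Fintype.card α : ENNReal) ≠ 0 := by simp
  have hβ : (Fintype.card β : ENNReal) ≠ 0 := by simp
  rw [ENNReal.mul_div_mul_right _ _ hβ (ENNReal.natCast_ne_top _),
    ENNReal.mul_div_mul_left _ _ hα (ENNReal.natCast_ne_top _),
    ENNReal.mul_div_mul_comm (.inl hα) (.inr hβ)]

theorem indepFun_fst_of_injective_fiberwise [MeasurableSpace α] [MeasurableSpace β]
    [MeasurableSpace (α × β)] [MeasurableSingletonClass (α × β)]
    {f : α → β → β} (hf : ∀ a, Injective (f a)) :
    IndepFun Prod.fst (fun ω => f ω.1 ω.2) (uniformOfFintype (α × β)).toMeasure := by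
  set e : α × β → α × β := fun ω => (ω.1, f ω.1 ω.2)
  have he : Bijective e := Finite.injective_iff_bijective.mp <| by
    rintro ⟨a, b⟩ ⟨a', b'⟩ h
    obtain ⟨rfl, hb⟩ := Prod.mk.inj h
    exact Prod.ext rfl (hf a hb)
  rw [indepFun_iff_measure_inter_preimage_eq_mul]
  intro A B _ _
  have hfst : Prod.fst ⁻¹' A = e ⁻¹' (A ×ˢ Set.univ) :=
    Set.ext fun _ => (and_iff_left trivial).symm
  have hsnd : (fun ω => f ω.1 ω.2) ⁻¹' B = e ⁻¹' (Set.univ ×ˢ B) :=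
    Set.ext fun _ => (and_iff_right trivial).symm
  rw [hfst, hsnd, ← Set.preimage_inter, Set.prod_inter_prod, Set.inter_univ, Set.univ_inter]
  simp only [toMeasure_uniformOfFintype_preimage_of_bijective he]
  exact toMeasure_uniformOfFintype_prod A B

end PMF

theorem shamir_perfect_secrecy_general (F : Type*) [Field F] [Fintype F] (t : ℕ)
    (γ : Fin (t - 1) → F) (hinj : Function.Injective γ) (hne : ∀ j, γ j ≠ 0) :
    letI Ω := F × (Fin (t - 1) → F)
    letI : MeasurableSpace Ω := ⊤
    letI : MeasurableSpace F := ⊤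
    letI : MeasurableSpace (Fin (t - 1) → F) := ⊤
    letI μ := (PMF.uniformOfFintype Ω).toMeasure
    IndepFun (fun ω : Ω => ω.1)
      (fun (ω : Ω) (j : Fin (t - 1)) =>
        ω.1 + ∑ i : Fin (t - 1), ω.2 i * γ j ^ ((i : ℕ) + 1)) μ := by
  let : MeasurableSpace (F × (Fin (t - 1) → F)) := ⊤
  have : MeasurableSingletonClass (F × (Fin (t - 1) → F)) :=
    ⟨fun _ => MeasurableSpace.measurableSet_top⟩
  refine @PMF.indepFun_fst_of_injective_fiberwise F (Fin (t - 1) → F) _ _ _ _ ⊤ ⊤ _ _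
    (fun s p j => s + ∑ i : Fin (t - 1), p i * γ j ^ ((i : ℕ) + 1)) fun s p q hpq => ?_
  exact injective_sum_mul_pow_succ hinj hne
    (funext fun j => add_left_cancel (congrFun hpq j))

/-- Perfect secrecy of Shamir secret sharing: if the secret `s` and the coefficients
`p_1, …, p_{t-1}` are i.i.d. uniform on `F_q` (modelled by the uniform measure on
`F × (Fin (t-1) → F)`), then for any `t-1` distinct nonzero evaluation points
`γ_1, …, γ_{t-1}`, the vector of evaluations `(P(γ_1), …, P(γ_{t-1}))` of
`P(x) = s + ∑ p_i x^i` is independent of the secret `s`. -/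
theorem shamir_perfect_secrecy (F : Type*) [Field F] [Fintype F] (t : ℕ) (ht : 1 ≤ t)
    (γ : Fin (t - 1) → F) (hinj : Function.Injective γ) (hne : ∀ j, γ j ≠ 0) :
    letI Ω := F × (Fin (t - 1) → F)
    letI : MeasurableSpace Ω := ⊤
    letI : MeasurableSpace F := ⊤
    letI : MeasurableSpace (Fin (t - 1) → F) := ⊤
    letI μ := (PMF.uniformOfFintype Ω).toMeasure
    IndepFun (fun ω : Ω => ω.1)
      (fun (ω : Ω) (j : Fin (t - 1)) =>
        ω.1 + ∑ i : Fin (t - 1), ω.2 i * γ j ^ ((i : ℕ) + 1)) μ :=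
  shamir_perfect_secrecy_general F t γ hinj hne
end

section
/- For every Sperner family A = {A_1,...,A_m} of subsets of [n], there exists a distributed secret sharing protocol (satisfying correctness and security) with access structure A; conversely, the access structure of any DSSP must be a Sperner family. Hence the maximum number of users servable with n storage nodes equals C(n, ⌊n/2⌋). -/
open scoped Classical

/-- The data visible to a user with access set `A`: the user can read the stored symbol
`y r` exactly when `y r` is stored (according to the storing matrix `Z`) on some node of
`A`; other symbols are invisible (`none`). -/
noncomputable def dsspView {n h : ℕ} {F : Type*} (A : Finset (Fin n))
    (Z : Fin n → Fin h → Bool) (y : Fin h → F) : Fin h → Option F :=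
  fun r => if ∃ i ∈ A, Z i r then some (y r) else none

/-- A distributed secret sharing protocol with `n` storage nodes and `m` users over the
finite field `F`: an access structure, an encoder of the `m` independent uniform secrets
into `h` stored symbols, a storing matrix, and decoders such that each user `j` recovers
its own secret `s j` (correctness), while the view of any user `j` is statistically
independent of any other user's secret `s l` (security, i.e. `H(s_l | y_j) = H(s_l)` for
uniform independent secrets, stated here in equivalent counting form). -/
structure DSSP (n m : ℕ) (F : Type*) [Field F] [Fintype F] where
  access : Fin m → Finset (Fin n)
  h : ℕ
  enc : (Fin m → F) → Fin h → F
  stored : Fin n → Fin h → Bool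
  dec : Fin m → (Fin h → Option F) → F
  correct : ∀ (s : Fin m → F) (j : Fin m),
    dec j (dsspView (access j) stored (enc s)) = s j
  secure : ∀ (j l : Fin m), l ≠ j → ∀ (v : Fin h → Option F) (a : F),
    (Fintype.card F) *
        (Finset.univ.filter (fun s : Fin m → F =>
          dsspView (access j) stored (enc s) = v ∧ s l = a)).card =
      (Finset.univ.filter (fun s : Fin m → F =>
          dsspView (access j) stored (enc s) = v)).card

/-! If `A j ⊆ A l`, user `l` sees everything user `j` sees and can therefore decode `s j`, which
security forbids; so access structures are Sperner families, and Sperner's theorem bounds the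
number of users.

Conversely, over a field in which `m - 1 ≠ 0`, the masks `t l = (∑ k, s k) / (m - 1) - s l`
satisfy `s j = ∑_{l ≠ j} t l`. Store `t l` on the nodes outside `A l`: by the Sperner property
user `j` reads exactly the `t l` with `l ≠ j`. These do not change when the same constant is
added to every secret except `s j`, so given the view of user `j` each other secret is uniform.
For `m ≤ 1` there is nothing to hide and every node stores the secret. -/

open Finset

theorem card_mul_card_filter_and_apply_eq {ι F β : Type*} [Fintype ι] [DecidableEq ι] [Ring F]
    [Fintype F] [DecidableEq F] [DecidableEq β]
    (V : (ι → F) → β) (k : ι → F) (l : ι) (hk : k l = 1)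
    (hV : ∀ s (c : F), V (s + c • k) = V s) (v : β) (a : F) :
    Fintype.card F * #{s | V s = v ∧ s l = a} = #{s | V s = v} := by
  have hshift : ∀ s (c d : F), s + c • k + d • k = s + (c + d) • k := by
    intro s c d; rw [add_assoc, add_smul]
  have hfiber : ∀ b, #{s | V s = v ∧ s l = b} = #{s | V s = v ∧ s l = a} := by
    intro b
    refine card_bij' (fun s _ => s + (a - b) • k) (fun s _ => s + (b - a) • k) ?_ ?_ ?_ ?_ <;>
      simp +contextual [hV, hk, hshift]
  calc Fintype.card F * #{s | V s = v ∧ s l = a}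
      = ∑ b : F, #{s | V s = v ∧ s l = b} := by simp [hfiber]
    _ = #{s | V s = v} := by
      rw [card_eq_sum_card_fiberwise (f := fun s => s l) (t := univ) (fun _ _ => mem_univ _)]
      simp only [filter_filter]

theorem not_forall_eq_of_card_mul_card_filter_and_apply_eq {ι F β : Type*} [Fintype ι]
    [DecidableEq ι] [Fintype F] [DecidableEq F] [Nontrivial F] [DecidableEq β]
    (V : (ι → F) → β) (l : ι)
    (hsec : ∀ v a, Fintype.card F * #{s | V s = v ∧ s l = a} = #{s | V s = v})
    (g : β → F) : ¬ ∀ s, g (V s) = s l := by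
  intro hg
  obtain ⟨s₀⟩ : Nonempty (ι → F) := inferInstance
  obtain ⟨a, ha⟩ := exists_ne (g (V s₀))
  have hempty : #{s | V s = V s₀ ∧ s l = a} = 0 := by
    simp only [card_eq_zero, filter_eq_empty_iff, mem_univ, true_implies, not_and]
    rintro s hs rfl
    exact ha (by rw [← hs, hg])
  have hpos : 0 < #{s | V s = V s₀} := card_pos.mpr ⟨s₀, by simp⟩
  have := hsec (V s₀) a
  rw [hempty, mul_zero] at this
  omega

theorem dsspView_of_subset {n h : ℕ} {F : Type*} {A B : Finset (Fin n)} (hAB : A ⊆ B)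
    (Z : Fin n → Fin h → Bool) (y : Fin h → F) :
    dsspView A Z y = fun r => if ∃ i ∈ A, Z i r then dsspView B Z y r else none := by
  funext r
  unfold dsspView
  split_ifs with hA hB <;> first | rfl | exact absurd (hA.imp fun i hi => ⟨hAB hi.1, hi.2⟩) hB

namespace DSSP

variable {n m : ℕ} {F : Type*} [Field F] [Fintype F]

theorem not_access_subset (P : DSSP n m F) {j l : Fin m} (hjl : j ≠ l) :
    ¬ P.access j ⊆ P.access l := by
  intro hsub
  refine not_forall_eq_of_card_mul_card_filter_and_apply_eq
    (fun s => dsspView (P.access l) P.stored (P.enc s)) j (P.secure l j hjl)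
    (fun w => P.dec j fun r => if ∃ i ∈ P.access j, P.stored i r then w r else none) ?_
  intro s
  rw [← dsspView_of_subset hsub, P.correct]

end DSSP

section Construction

variable {n m : ℕ}

def complementStore (A : Fin m → Finset (Fin n)) (i : Fin n) (l : Fin m) : Bool :=
  decide (i ∉ A l)

theorem dsspView_complementStore (A : Fin m → Finset (Fin n)) (B : Finset (Fin n))
    {F : Type*} (y : Fin m → F) (l : Fin m) :
    dsspView B (complementStore A) y l = if B ⊆ A l then none else some (y l) := by
  simp only [dsspView, complementStore, decide_eq_true_eq, ← not_subset]
  exact ite_not _ _ _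

variable {F : Type*} [Field F]

noncomputable def maskedSecret (s : Fin m → F) (l : Fin m) : F :=
  ((m : F) - 1)⁻¹ * ∑ k, s k - s l

theorem sum_erase_maskedSecret (hm : (m : F) - 1 ≠ 0) (s : Fin m → F) (j : Fin m) :
    ∑ l ∈ univ.erase j, maskedSecret s l = s j := by
  rw [sum_erase_eq_sub (mem_univ j)]
  simp only [maskedSecret, sum_sub_distrib, sum_const, card_univ, Fintype.card_fin, nsmul_eq_mul]
  field_simp
  ring

theorem maskedSecret_add_smul (hm : (m : F) - 1 ≠ 0) (s : Fin m → F) (c : F) {j l : Fin m}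
    (hlj : l ≠ j) : maskedSecret (s + c • (1 - Pi.single j 1)) l = maskedSecret s l := by
  have hsum :
      ∑ k, (s + c • (1 - Pi.single j 1) : Fin m → F) k = ∑ k, s k + c * ((m : F) - 1) := by
    simp [sum_add_distrib, ← mul_sum, sum_sub_distrib]
  rw [maskedSecret, maskedSecret, hsum]
  simp only [Pi.add_apply, Pi.smul_apply, Pi.sub_apply, Pi.one_apply, Pi.single_eq_of_ne hlj,
    smul_eq_mul]
  field_simp
  ring

variable [Fintype F]

noncomputable def maskedDSSP (A : Fin m → Finset (Fin n))
    (hA : ∀ j l, j ≠ l → ¬ A j ⊆ A l) (hm : (m : F) - 1 ≠ 0) : DSSP n m F where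
  access := A
  h := m
  enc := maskedSecret
  stored := complementStore A
  dec j v := ∑ l ∈ univ.erase j, (v l).getD 0
  correct s j := by
    calc ∑ l ∈ univ.erase j, (dsspView (A j) (complementStore A) (maskedSecret s) l).getD 0
        = ∑ l ∈ univ.erase j, maskedSecret s l := by
          refine sum_congr rfl fun l hl => ?_
          rw [dsspView_complementStore, if_neg (hA j l (ne_of_mem_erase hl).symm)]
          rfl
      _ = s j := sum_erase_maskedSecret hm s j
  secure j l hlj :=
    card_mul_card_filter_and_apply_eq _ (1 - Pi.single j 1) l (by simp [hlj]) fun s c => by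
      funext r
      simp only [dsspView_complementStore]
      by_cases hrj : r = j
      · simp [hrj]
      · rw [maskedSecret_add_smul hm s c hrj]

noncomputable def broadcastDSSP (A : Fin m → Finset (Fin n)) (hm : m ≤ 1)
    (hne : ∀ j, (A j).Nonempty) : DSSP n m F where
  access := A
  h := m
  enc s := s
  stored _ _ := true
  dec j v := (v j).getD 0
  correct s j := by simp [dsspView, show ∃ i, i ∈ A j from hne j]
  secure j l hlj := absurd (Fin.ext (by omega)) hlj

end Construction

theorem exists_dssp_of_sperner {n m : ℕ} (A : Fin m → Finset (Fin n))
    (hne : ∀ j, (A j).Nonempty) (hA : ∀ j l, j ≠ l → ¬ A j ⊆ A l) :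
    ∃ (F : Type) (instF : Field F) (instT : Fintype F) (P : @DSSP n m F instF instT),
      P.access = A := by
  rcases le_or_gt m 1 with hm | hm
  · exact ⟨ZMod 2, inferInstance, inferInstance, broadcastDSSP A hm hne, rfl⟩
  · obtain ⟨p, hmp, hp⟩ := Nat.exists_infinite_primes m
    have : Fact p.Prime := ⟨hp⟩
    have hm' : (m : ZMod p) - 1 ≠ 0 := by
      rw [← Nat.cast_pred (by omega), Ne, ZMod.natCast_eq_zero_iff]
      exact fun h => absurd (Nat.le_of_dvd (by omega) h) (by omega)
    exact ⟨ZMod p, inferInstance, inferInstance, maskedDSSP A hA hm', rfl⟩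

theorem card_le_choose_of_not_subset {ι α : Type*} [Fintype ι] [Fintype α] [DecidableEq α]
    (A : ι → Finset α) (hA : ∀ j l, j ≠ l → ¬ A j ⊆ A l) :
    Fintype.card ι ≤ (Fintype.card α).choose (Fintype.card α / 2) := by
  have hinj : Function.Injective A := fun j l h => by_contra fun hjl => hA j l hjl h.subset
  have hanti : IsAntichain (· ⊆ ·) (SetLike.coe (univ.image A)) := by
    rw [coe_image, coe_univ, Set.image_univ]
    rintro _ ⟨j, rfl⟩ _ ⟨l, rfl⟩ hne
    exact hA j l fun h => hne (h ▸ rfl)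
  simpa [card_image_of_injective _ hinj] using hanti.sperner

theorem exists_nonempty_not_subset_card_choose {n : ℕ} (hn : 0 < n) :
    ∃ A : Fin (n.choose (n / 2)) → Finset (Fin n),
      (∀ j, (A j).Nonempty) ∧ ∀ j l, j ≠ l → ¬ A j ⊆ A l := by
  set 𝒜 := powersetCard (n - n / 2) (univ : Finset (Fin n))
  have hcard : #𝒜 = n.choose (n / 2) := by
    rw [card_powersetCard, card_univ, Fintype.card_fin, Nat.choose_symm (Nat.div_le_self n 2)]
  let e : Fin (n.choose (n / 2)) ≃ 𝒜 := (finCongr hcard.symm).trans 𝒜.equivFin.symm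
  have hcard_e (j) : #(e j).1 = n - n / 2 := (mem_powersetCard.mp (e j).2).2
  refine ⟨fun j => (e j).1, fun j => card_pos.mp (by rw [hcard_e]; omega), ?_⟩
  intro j l hjl hsub
  exact hjl (e.injective (Subtype.ext (eq_of_subset_of_card_le hsub (by rw [hcard_e, hcard_e]))))

/-- (i) For every Sperner family `A_1, …, A_m` of nonempty subsets of `[n]` there is a
distributed secret sharing protocol (over a suitable finite field) with access structure
`A`; (ii) conversely, the access structure of any DSSP must be a Sperner family; hence
(iii) the maximum number of users servable with `n` storage nodes is `C(n, ⌊n/2⌋)`. -/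
theorem dssp_iff_sperner_and_max_users (n : ℕ) (hn : 0 < n) :
    (∀ (m : ℕ) (A : Fin m → Finset (Fin n)),
      (∀ j, (A j).Nonempty) →
      (∀ j l, j ≠ l → ¬ A j ⊆ A l) →
      ∃ (F : Type) (instF : Field F) (instT : Fintype F) (P : @DSSP n m F instF instT),
        P.access = A) ∧
    (∀ (m : ℕ) (F : Type) (instF : Field F) (instT : Fintype F)
        (P : @DSSP n m F instF instT) (j l : Fin m), j ≠ l → ¬ P.access j ⊆ P.access l) ∧
    IsGreatest
      {m : ℕ | ∃ (F : Type) (instF : Field F) (instT : Fintype F),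
        Nonempty (@DSSP n m F instF instT)}
      (n.choose (n / 2)) := by
  refine ⟨fun m A hne hA => exists_dssp_of_sperner A hne hA,
    fun m F _ _ P j l hjl => P.not_access_subset hjl, ?_, ?_⟩
  · obtain ⟨A, hne, hA⟩ := exists_nonempty_not_subset_card_choose hn
    obtain ⟨F, instF, instT, P, -⟩ := exists_dssp_of_sperner A hne hA
    exact ⟨F, instF, instT, ⟨P⟩⟩
  · rintro m ⟨F, _, _, ⟨P⟩⟩
    simpa using card_le_choose_of_not_subset P.access fun j l hjl => P.not_access_subset hjl
end
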